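/- Let n ≥ 1, let G_p, G_d, Δ_m be real n×n matrices, let A be the 2n×2n block matrix [[0, 1], [-G_p, -G_d]], let G = [G_p G_d] (n×2n), and let D be the 2n×n block matrix with upper block 0 and lower block the identity. Let P be a real symmetric positive definite 2n×2n matrix satisfying P A + Aᵀ P = -1, and suppose ‖Δ_m‖ < 1/(2 ‖G‖ λ_max(P)). Then every differentiable solution z : [0,∞) → ℝ^{2n} of ż = A z - D Δ_m G z satisfies ‖z(t)‖ ≤ √(λ_max(P)/λ_min(P)) · ‖z(0)‖ · e^{-μ t} for all t ≥ 0, where μ = (1 - 2‖G‖ λ_max(P) ‖Δ_m‖)/(2 λ_max(P)) > 0; in particular the origin of the perturbed error system is globally exponentially stable. -/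

import Mathlib

/-!
Take the Lyapunov function `V z = ⟪z, P z⟫`. Along `ż = A z - D Δ_m G z` the Lyapunov equation
`P A + Aᵀ P = -1` turns the nominal part of `V'` into `-‖z‖²`, while the perturbation contributes
at most `2 λ_max ‖Δ_m‖ ‖G‖ ‖z‖²` (the matrix `D` is an isometry). Since `V ≤ λ_max ‖z‖²`, this gives
`V' ≤ -2μ V`, so `V` decays like `e^{-2μt}` by Grönwall, and `λ_min ‖z‖² ≤ V ≤ λ_max ‖z‖²` turns
this into the bound on `‖z‖`.
-/

open Matrix

/-- The operator norm of a real matrix induced by the Euclidean norm. -/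
noncomputable def opNorm {m n : Type*} [Fintype m] [Fintype n] [DecidableEq n]
    (A : Matrix m n ℝ) : ℝ :=
  ‖LinearMap.toContinuousLinearMap (Matrix.toEuclideanLin A)‖

open Set RealInnerProductSpace

theorem le_mul_exp_of_hasDerivWithinAt_le_mul {V V' : ℝ → ℝ} {K : ℝ}
    (hV : ∀ t ∈ Ici (0 : ℝ), HasDerivWithinAt V (V' t) (Ici 0) t)
    (hV' : ∀ t ∈ Ici (0 : ℝ), V' t ≤ K * V t) {t : ℝ} (ht : 0 ≤ t) :
    V t ≤ V 0 * Real.exp (K * t) := by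
  have h := le_gronwallBound_of_liminf_deriv_right_le (b := t) (ε := 0) (δ := V 0)
    (fun s hs => (hV s hs.1).continuousWithinAt.mono Icc_subset_Ici_self)
    (fun s hs _ hr => ((hV s hs.1).mono (Ici_subset_Ici.2 hs.1)).liminf_right_slope_le hr)
    le_rfl (fun s hs => by simpa using hV' s hs.1) t ⟨ht, le_rfl⟩
  rwa [gronwallBound_ε0, sub_zero] at h

theorem le_sqrt_mul_mul_exp_half_of_sq_le {x y r a : ℝ} (hx : 0 ≤ x) (hy : 0 ≤ y) (hr : 0 ≤ r)
    (h : x ^ 2 ≤ r * y ^ 2 * Real.exp a) : x ≤ √r * y * Real.exp (a / 2) := by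
  have hexp : Real.exp a = Real.exp (a / 2) ^ 2 := by rw [← Real.exp_nat_mul]; ring_nf
  rw [hexp, ← Real.sq_sqrt hr, ← mul_pow, ← mul_pow] at h
  exact (pow_le_pow_iff_left₀ hx (by positivity) two_ne_zero).1 h

section EuclideanLin

variable {m n p o : Type*} [Fintype m] [Fintype n] [Fintype p] [Fintype o] [DecidableEq n]

theorem opNorm_nonneg (M : Matrix m n ℝ) : 0 ≤ opNorm M := norm_nonneg _

theorem norm_toEuclideanLin_le_opNorm (M : Matrix m n ℝ) (x : EuclideanSpace ℝ n) :
    ‖toEuclideanLin M x‖ ≤ opNorm M * ‖x‖ :=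
  (LinearMap.toContinuousLinearMap (toEuclideanLin M)).le_opNorm x

theorem norm_toEuclideanLin_fromRows_zero_one (x : EuclideanSpace ℝ n) :
    ‖toEuclideanLin (fromRows (0 : Matrix m n ℝ) (1 : Matrix n n ℝ)) x‖ = ‖x‖ := by
  simp [EuclideanSpace.norm_eq, toLpLin_apply, fromRows_mulVec, Fintype.sum_sum_type]

theorem norm_toEuclideanLin_fromRows_zero_one_mul_mul_le [DecidableEq p] [DecidableEq o]
    (Δ : Matrix n p ℝ) (G : Matrix p o ℝ) (x : EuclideanSpace ℝ o) :
    ‖toEuclideanLin (fromRows (0 : Matrix m n ℝ) (1 : Matrix n n ℝ) * Δ * G) x‖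
      ≤ opNorm Δ * opNorm G * ‖x‖ := by
  rw [Matrix.mul_assoc, toLpLin_mul_same, LinearMap.comp_apply,
    norm_toEuclideanLin_fromRows_zero_one, toLpLin_mul_same, LinearMap.comp_apply, mul_assoc]
  exact (norm_toEuclideanLin_le_opNorm Δ _).trans
    (mul_le_mul_of_nonneg_left (norm_toEuclideanLin_le_opNorm G x) (opNorm_nonneg Δ))

theorem inner_toEuclideanLin_left [DecidableEq m] (M : Matrix m n ℝ) (x : EuclideanSpace ℝ n)
    (y : EuclideanSpace ℝ m) : ⟪toEuclideanLin M x, y⟫ = ⟪x, toEuclideanLin Mᵀ y⟫ := by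
  rw [← conjTranspose_eq_transpose_of_trivial, toEuclideanLin_conjTranspose_eq_adjoint,
    LinearMap.adjoint_inner_right]

end EuclideanLin

namespace Matrix

variable {n : Type*} [Fintype n] [DecidableEq n] {P : Matrix n n ℝ}

namespace IsHermitian

variable (hP : P.IsHermitian)

theorem toEuclideanLin_eigenvectorBasis (i : n) :
    toEuclideanLin P (hP.eigenvectorBasis i) = hP.eigenvalues i • hP.eigenvectorBasis i := by
  ext j
  simpa [toLpLin_apply] using congrFun (hP.mulVec_eigenvectorBasis i) j

theorem inner_eigenvectorBasis_toEuclideanLin (i : n) (y : EuclideanSpace ℝ n) :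
    ⟪hP.eigenvectorBasis i, toEuclideanLin P y⟫
      = hP.eigenvalues i * ⟪hP.eigenvectorBasis i, y⟫ := by
  rw [← isSymmetric_toEuclideanLin_iff.2 hP, hP.toEuclideanLin_eigenvectorBasis,
    real_inner_smul_left]

theorem inner_toEuclideanLin_self_eq_sum (x : EuclideanSpace ℝ n) :
    ⟪x, toEuclideanLin P x⟫ = ∑ i, hP.eigenvalues i * ⟪hP.eigenvectorBasis i, x⟫ ^ 2 := by
  rw [← hP.eigenvectorBasis.sum_inner_mul_inner]
  refine Finset.sum_congr rfl fun i _ => ?_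
  rw [hP.inner_eigenvectorBasis_toEuclideanLin, real_inner_comm x]
  ring

theorem iInf_eigenvalues_mul_norm_sq_le (x : EuclideanSpace ℝ n) :
    (⨅ i, hP.eigenvalues i) * ‖x‖ ^ 2 ≤ ⟪x, toEuclideanLin P x⟫ := by
  rw [hP.inner_toEuclideanLin_self_eq_sum, ← hP.eigenvectorBasis.sum_sq_inner_right,
    Finset.mul_sum]
  gcongr with i
  exact ciInf_le (Finite.bddBelow_range _) i

theorem inner_toEuclideanLin_self_le (x : EuclideanSpace ℝ n) :
    ⟪x, toEuclideanLin P x⟫ ≤ (⨆ i, hP.eigenvalues i) * ‖x‖ ^ 2 := by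
  rw [hP.inner_toEuclideanLin_self_eq_sum, ← hP.eigenvectorBasis.sum_sq_inner_right,
    Finset.mul_sum]
  gcongr with i
  exact le_ciSup (Finite.bddAbove_range _) i

end IsHermitian

theorem PosSemidef.norm_toEuclideanLin_le (hP : P.PosSemidef) (x : EuclideanSpace ℝ n) :
    ‖toEuclideanLin P x‖ ≤ (⨆ i, hP.isHermitian.eigenvalues i) * ‖x‖ := by
  have hlam : 0 ≤ ⨆ i, hP.isHermitian.eigenvalues i := Real.iSup_nonneg hP.eigenvalues_nonneg
  refine (pow_le_pow_iff_left₀ (norm_nonneg _) (by positivity) two_ne_zero).1 ?_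
  rw [mul_pow, ← hP.isHermitian.eigenvectorBasis.sum_sq_inner_right x,
    ← hP.isHermitian.eigenvectorBasis.sum_sq_inner_right (toEuclideanLin P x), Finset.mul_sum]
  gcongr with i
  rw [hP.isHermitian.inner_eigenvectorBasis_toEuclideanLin, mul_pow]
  gcongr
  · exact hP.eigenvalues_nonneg i
  · exact le_ciSup (Finite.bddAbove_range _) i

theorem PosDef.iInf_eigenvalues_pos [Nonempty n] (hP : P.PosDef) :
    0 < ⨅ i, hP.isHermitian.eigenvalues i := by
  obtain ⟨i, hi⟩ := exists_eq_ciInf_of_finite (f := hP.isHermitian.eigenvalues)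
  exact hi ▸ hP.eigenvalues_pos i

theorem PosDef.iSup_eigenvalues_pos [Nonempty n] (hP : P.PosDef) :
    0 < ⨆ i, hP.isHermitian.eigenvalues i :=
  hP.iInf_eigenvalues_pos.trans_le
    (ciInf_le_ciSup (Finite.bddBelow_range _) (Finite.bddAbove_range _))

end Matrix

section Lyapunov

variable {n : Type*} [Fintype n] [DecidableEq n] {P A B : Matrix n n ℝ}

theorem HasDerivWithinAt.inner_toEuclideanLin_self (P : Matrix n n ℝ)
    {z : ℝ → EuclideanSpace ℝ n} {z' : EuclideanSpace ℝ n} {s : Set ℝ} {t : ℝ}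
    (hz : HasDerivWithinAt z z' s t) :
    HasDerivWithinAt (fun u => ⟪z u, toEuclideanLin P (z u)⟫)
      (⟪z t, toEuclideanLin P z'⟫ + ⟪z', toEuclideanLin P (z t)⟫) s t :=
  hz.inner ℝ <|
    (LinearMap.toContinuousLinearMap (toEuclideanLin P)).hasFDerivAt.comp_hasDerivWithinAt t hz

theorem inner_add_inner_eq_neg_norm_sq_of_lyapunov (hLyap : P * A + Aᵀ * P = -1)
    (x : EuclideanSpace ℝ n) :
    ⟪x, toEuclideanLin P (toEuclideanLin A x)⟫ + ⟪toEuclideanLin A x, toEuclideanLin P x⟫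
      = -‖x‖ ^ 2 := by
  have h := congrArg (fun M => ⟪x, toEuclideanLin M x⟫) hLyap
  simp only [map_add, map_neg, toLpLin_mul_same, toLpLin_one, LinearMap.add_apply,
    LinearMap.comp_apply, LinearMap.neg_apply, LinearMap.id_apply, inner_add_right,
    inner_neg_right, real_inner_self_eq_norm_sq] at h
  rwa [inner_toEuclideanLin_left]

theorem inner_sub_add_inner_sub_le_of_lyapunov (hP : P.PosSemidef)
    (hLyap : P * A + Aᵀ * P = -1) {β : ℝ} (hB : ∀ x, ‖toEuclideanLin B x‖ ≤ β * ‖x‖)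
    (x : EuclideanSpace ℝ n) :
    ⟪x, toEuclideanLin P (toEuclideanLin A x - toEuclideanLin B x)⟫
        + ⟪toEuclideanLin A x - toEuclideanLin B x, toEuclideanLin P x⟫
      ≤ -(1 - 2 * (⨆ i, hP.isHermitian.eigenvalues i) * β) * ‖x‖ ^ 2 := by
  set lam := ⨆ i, hP.isHermitian.eigenvalues i
  have hlam : 0 ≤ lam := Real.iSup_nonneg hP.eigenvalues_nonneg
  have hsymm : ⟪toEuclideanLin B x, toEuclideanLin P x⟫
      = ⟪x, toEuclideanLin P (toEuclideanLin B x)⟫ := by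
    rw [real_inner_comm, isSymmetric_toEuclideanLin_iff.2 hP.isHermitian]
  have hcross : |⟪x, toEuclideanLin P (toEuclideanLin B x)⟫| ≤ lam * β * ‖x‖ ^ 2 :=
    calc |⟪x, toEuclideanLin P (toEuclideanLin B x)⟫|
        ≤ ‖x‖ * ‖toEuclideanLin P (toEuclideanLin B x)‖ := abs_real_inner_le_norm _ _
      _ ≤ ‖x‖ * (lam * (β * ‖x‖)) := by
        gcongr
        exact (hP.norm_toEuclideanLin_le _).trans (by gcongr; exact hB x)
      _ = lam * β * ‖x‖ ^ 2 := by ring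
  rw [map_sub, inner_sub_right, inner_sub_left, hsymm]
  linarith [inner_add_inner_eq_neg_norm_sq_of_lyapunov hLyap x, (abs_le.1 hcross).1]

theorem inner_toEuclideanLin_self_le_mul_exp_of_lyapunov [Nonempty n] (hP : P.PosDef)
    (hLyap : P * A + Aᵀ * P = -1) {β : ℝ} (hB : ∀ x, ‖toEuclideanLin B x‖ ≤ β * ‖x‖)
    (hβ : 2 * (⨆ i, hP.isHermitian.eigenvalues i) * β ≤ 1) {z : ℝ → EuclideanSpace ℝ n}
    (hz : ∀ t ∈ Ici (0 : ℝ), HasDerivWithinAt z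
      (toEuclideanLin A (z t) - toEuclideanLin B (z t)) (Ici 0) t)
    {t : ℝ} (ht : 0 ≤ t) :
    ⟪z t, toEuclideanLin P (z t)⟫ ≤ ⟪z 0, toEuclideanLin P (z 0)⟫
      * Real.exp (-((1 - 2 * (⨆ i, hP.isHermitian.eigenvalues i) * β)
        / (⨆ i, hP.isHermitian.eigenvalues i)) * t) := by
  set lmax := ⨆ i, hP.isHermitian.eigenvalues i
  have hmax : 0 < lmax := hP.iSup_eigenvalues_pos
  refine le_mul_exp_of_hasDerivWithinAt_le_mul
    (fun s hs => (hz s hs).inner_toEuclideanLin_self P) (fun s _ => ?_) ht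
  calc _ ≤ -(1 - 2 * lmax * β) * ‖z s‖ ^ 2 :=
        inner_sub_add_inner_sub_le_of_lyapunov hP.posSemidef hLyap hB (z s)
    _ = -((1 - 2 * lmax * β) / lmax) * (lmax * ‖z s‖ ^ 2) := by field_simp
    _ ≤ -((1 - 2 * lmax * β) / lmax) * ⟪z s, toEuclideanLin P (z s)⟫ := by
        refine mul_le_mul_of_nonpos_left (hP.isHermitian.inner_toEuclideanLin_self_le (z s)) ?_
        exact neg_nonpos.2 (div_nonneg (by linarith) hmax.le)

theorem norm_le_mul_exp_of_lyapunov_of_perturbation [Nonempty n] (hP : P.PosDef)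
    (hLyap : P * A + Aᵀ * P = -1) {β : ℝ} (hB : ∀ x, ‖toEuclideanLin B x‖ ≤ β * ‖x‖)
    (hβ : 2 * (⨆ i, hP.isHermitian.eigenvalues i) * β ≤ 1) {z : ℝ → EuclideanSpace ℝ n}
    (hz : ∀ t ∈ Ici (0 : ℝ), HasDerivWithinAt z
      (toEuclideanLin A (z t) - toEuclideanLin B (z t)) (Ici 0) t)
    {t : ℝ} (ht : 0 ≤ t) :
    ‖z t‖ ≤ √((⨆ i, hP.isHermitian.eigenvalues i) / (⨅ i, hP.isHermitian.eigenvalues i))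
      * ‖z 0‖ * Real.exp (-((1 - 2 * (⨆ i, hP.isHermitian.eigenvalues i) * β)
        / (2 * (⨆ i, hP.isHermitian.eigenvalues i))) * t) := by
  set lmax := ⨆ i, hP.isHermitian.eigenvalues i
  set lmin := ⨅ i, hP.isHermitian.eigenvalues i
  have hmin : 0 < lmin := hP.iInf_eigenvalues_pos
  set rate := (1 - 2 * lmax * β) / lmax
  have hsq : ‖z t‖ ^ 2 ≤ lmax / lmin * ‖z 0‖ ^ 2 * Real.exp (-rate * t) := by
    rw [div_mul_eq_mul_div, div_mul_eq_mul_div, le_div_iff₀ hmin]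
    calc ‖z t‖ ^ 2 * lmin ≤ ⟪z t, toEuclideanLin P (z t)⟫ := by
          linarith [hP.isHermitian.iInf_eigenvalues_mul_norm_sq_le (z t)]
      _ ≤ ⟪z 0, toEuclideanLin P (z 0)⟫ * Real.exp (-rate * t) :=
          inner_toEuclideanLin_self_le_mul_exp_of_lyapunov hP hLyap hB hβ hz ht
      _ ≤ lmax * ‖z 0‖ ^ 2 * Real.exp (-rate * t) := by
          gcongr
          exact hP.isHermitian.inner_toEuclideanLin_self_le (z 0)
  convert le_sqrt_mul_mul_exp_half_of_sq_le (norm_nonneg _) (norm_nonneg _)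
    (div_nonneg hP.iSup_eigenvalues_pos.le hmin.le) hsq using 3
  ring

end Lyapunov

theorem perturbed_system_globally_exponentially_stable_general
    {n : ℕ}
    (Δ_m : Matrix (Fin n) (Fin n) ℝ)
    (A : Matrix (Fin n ⊕ Fin n) (Fin n ⊕ Fin n) ℝ)
    (G : Matrix (Fin n) (Fin n ⊕ Fin n) ℝ)
    (D : Matrix (Fin n ⊕ Fin n) (Fin n) ℝ) (hD : D = Matrix.fromRows 0 1)
    (P : Matrix (Fin n ⊕ Fin n) (Fin n ⊕ Fin n) ℝ)
    (hP : P.PosDef) (hLyap : P * A + Aᵀ * P = -1)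
    (hsmall : opNorm Δ_m < 1 / (2 * opNorm G * (⨆ i, hP.isHermitian.eigenvalues i)))
    (z : ℝ → EuclideanSpace ℝ (Fin n ⊕ Fin n))
    (hz : ∀ t ∈ Set.Ici (0 : ℝ), HasDerivWithinAt z
      (Matrix.toEuclideanLin A (z t) - Matrix.toEuclideanLin (D * Δ_m * G) (z t))
      (Set.Ici 0) t)
    (μ : ℝ)
    (hμ : μ = (1 - 2 * opNorm G * (⨆ i, hP.isHermitian.eigenvalues i) * opNorm Δ_m)
      / (2 * (⨆ i, hP.isHermitian.eigenvalues i))) :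
    0 < μ ∧ ∀ t ≥ (0 : ℝ),
      ‖z t‖ ≤ Real.sqrt ((⨆ i, hP.isHermitian.eigenvalues i)
          / (⨅ i, hP.isHermitian.eigenvalues i)) * ‖z 0‖ * Real.exp (-μ * t) := by
  set lmax := ⨆ i, hP.isHermitian.eigenvalues i
  have hgain : 0 < 2 * opNorm G * lmax := by
    by_contra! h
    linarith [one_div_nonpos.2 h, opNorm_nonneg Δ_m]
  have hsmall' : 2 * opNorm G * lmax * opNorm Δ_m < 1 := by
    rw [lt_div_iff₀ hgain] at hsmall
    linarith
  have hmax : 0 < lmax := pos_of_mul_pos_right hgain (by linarith [opNorm_nonneg G])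
  have : Nonempty (Fin n ⊕ Fin n) := by
    by_contra! h
    simp [lmax, Real.iSup_of_isEmpty] at hmax
  refine ⟨hμ ▸ div_pos (by linarith) (by linarith), fun t ht => ?_⟩
  have hB (x : EuclideanSpace ℝ (Fin n ⊕ Fin n)) :
      ‖toEuclideanLin (D * Δ_m * G) x‖ ≤ opNorm Δ_m * opNorm G * ‖x‖ :=
    hD ▸ norm_toEuclideanLin_fromRows_zero_one_mul_mul_le Δ_m G x
  convert norm_le_mul_exp_of_lyapunov_of_perturbation hP hLyap hB (by linarith) hz ht using 4
  rw [hμ]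
  ring

/-- If `‖Δ_m‖ < 1/(2‖G‖λ_max(P))`, then every solution of the perturbed closed-loop
error system decays exponentially with rate `μ = (1 - 2‖G‖λ_max(P)‖Δ_m‖)/(2λ_max(P))`:
the origin is globally exponentially stable. -/
theorem perturbed_system_globally_exponentially_stable
    {n : ℕ} (hn : 1 ≤ n)
    (G_p G_d Δ_m : Matrix (Fin n) (Fin n) ℝ)
    (A : Matrix (Fin n ⊕ Fin n) (Fin n ⊕ Fin n) ℝ)
    (hA : A = Matrix.fromBlocks 0 1 (-G_p) (-G_d))
    (G : Matrix (Fin n) (Fin n ⊕ Fin n) ℝ) (hG : G = Matrix.fromCols G_p G_d)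
    (D : Matrix (Fin n ⊕ Fin n) (Fin n) ℝ) (hD : D = Matrix.fromRows 0 1)
    (P : Matrix (Fin n ⊕ Fin n) (Fin n ⊕ Fin n) ℝ)
    (hP : P.PosDef) (hLyap : P * A + Aᵀ * P = -1)
    (hsmall : opNorm Δ_m < 1 / (2 * opNorm G * (⨆ i, hP.isHermitian.eigenvalues i)))
    (z : ℝ → EuclideanSpace ℝ (Fin n ⊕ Fin n))
    (hz : ∀ t ∈ Set.Ici (0 : ℝ), HasDerivWithinAt z
      (Matrix.toEuclideanLin A (z t) - Matrix.toEuclideanLin (D * Δ_m * G) (z t))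
      (Set.Ici 0) t)
    (μ : ℝ)
    (hμ : μ = (1 - 2 * opNorm G * (⨆ i, hP.isHermitian.eigenvalues i) * opNorm Δ_m)
      / (2 * (⨆ i, hP.isHermitian.eigenvalues i))) :
    0 < μ ∧ ∀ t ≥ (0 : ℝ),
      ‖z t‖ ≤ Real.sqrt ((⨆ i, hP.isHermitian.eigenvalues i)
          / (⨅ i, hP.isHermitian.eigenvalues i)) * ‖z 0‖ * Real.exp (-μ * t) :=
  perturbed_system_globally_exponentially_stable_general Δ_m A G D hD P hP hLyap hsmall z hz μ hμ
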